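/- Let ξ be a Reeb field, let φ ∈ cpsh(ξ), and let (ξ_i) be a sequence of Reeb fields converging to ξ in N_ℝ. Then there exists a sequence φ_i ∈ H(ξ_i) converging to φ uniformly on every compact subset of X^an∖{o}. -/

import Mathlib

open Filter Topology
open scoped Classical

noncomputable section

/-- A (real) semivaluation on `R` trivial on `k`, encoded as a function `R → ℝ ∪ {+∞} ⊆ EReal`. -/
def IsSemival (k : Type*) {R : Type*} [Field k] [CommRing R] [Algebra k R]
    (v : R → EReal) : Prop :=
  (∀ f, v f ≠ ⊥) ∧ (∀ f g, v (f * g) = v f + v g) ∧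
    (∀ f g, min (v f) (v g) ≤ v (f + g)) ∧ v 0 = ⊤ ∧
    ∀ c : k, c ≠ 0 → v (algebraMap k R c) = 0

/-- The pairing `⟨ξ, α⟩` between `ξ ∈ N_ℝ` and a weight `α ∈ M`. -/
def pairing {r : ℕ} (ξ : Fin r → ℝ) (α : Fin r → ℤ) : ℝ := ∑ i, ξ i * (α i : ℝ)

variable {k : Type*} [Field k] [IsAlgClosed k] [CharZero k]
variable {R : Type*} [CommRing R] [IsDomain R] [IsIntegrallyClosed R] [Algebra k R]
  [Algebra.FiniteType k R]
variable {r : ℕ} (𝒜 : (Fin r → ℤ) → Submodule k R) [GradedAlgebra 𝒜]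

/-- `ξ` is a Reeb field: `⟨ξ,α⟩ > 0` for all `α ∈ Λ ∖ {0}`. -/
def IsReeb (ξ : Fin r → ℝ) : Prop :=
  ∀ α : Fin r → ℤ, α ≠ 0 → 𝒜 α ≠ ⊥ → 0 < pairing ξ α

/-- The maximal ideal `𝔪` of the cone point. -/
def mIdeal : Ideal R := Ideal.span {f : R | ∃ α, α ≠ 0 ∧ f ∈ 𝒜 α}

/-- The semivaluation of the cone point `o`: `+∞` on `𝔪`, `0` elsewhere. -/
def oFun : R → EReal := fun f => if f ∈ mIdeal 𝒜 then (⊤ : EReal) else 0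

/-- The punctured Berkovich cone `X^an ∖ {o}`. -/
def XanP : Set (R → EReal) := {v | IsSemival k v ∧ v ≠ oFun 𝒜}

/-- The term `(log|f| + λ)/⟨ξ,α⟩` evaluated at `v`; recall `log|f|(v) = -v(f)`. -/
def fsTerm (ξ : Fin r → ℝ) (α : Fin r → ℤ) (f : R) (lam : ℝ) (v : R → EReal) : EReal :=
  (((pairing ξ α)⁻¹ : ℝ) : EReal) * (-(v f) + (lam : EReal))

/-- Fubini–Study functions with polarization `ξ`. -/
def IsFS (ξ : Fin r → ℝ) (φ : XanP 𝒜 → ℝ) : Prop :=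
  ∃ (N : ℕ) (f : Fin N → R) (α : Fin N → Fin r → ℤ) (lam : Fin N → ℝ),
    (∀ j, α j ≠ 0 ∧ f j ∈ 𝒜 (α j) ∧ f j ≠ 0) ∧
    (Ideal.span (Set.range f)).radical = mIdeal 𝒜 ∧
    ∀ v : XanP 𝒜, (φ v : EReal) = ⨆ j, fsTerm ξ (α j) (f j) (lam j) v.1

/-- Continuous `ξ`-psh functions: the closure of `H(ξ)` in `C⁰(X^an∖{o})` with the
topology of uniform convergence on compact subsets (compact-open topology). -/
def cpsh (ξ : Fin r → ℝ) : Set C(↥(XanP 𝒜), ℝ) := closure {φ | IsFS 𝒜 ξ ⇑φ}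

/-- `ξ`-psh functions: pointwise limits of decreasing nets of continuous `ξ`-psh
functions, not identically `-∞`, with values in `ℝ ∪ {-∞}`. -/
def IsPsh (ξ : Fin r → ℝ) (φ : XanP 𝒜 → EReal) : Prop :=
  (∀ v, φ v ≠ ⊤) ∧ (∃ v, φ v ≠ ⊥) ∧
  ∃ (ι : Type) (le : ι → ι → Prop),
    Nonempty ι ∧ (∀ i j : ι, ∃ l, le i l ∧ le j l) ∧
    ∃ φi : ι → C(↥(XanP 𝒜), ℝ),
      (∀ i, φi i ∈ cpsh 𝒜 ξ) ∧
      (∀ i j, le i j → ∀ v, φi j v ≤ φi i v) ∧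
      ∀ v, (⨅ i, ((φi i v : ℝ) : EReal)) = φ v

/-- The NA link `X₀ = {v : v(𝔪) = 0}`, as a subset of the punctured cone. -/
def linkSet : Set (↥(XanP 𝒜)) :=
  {v | (∀ f ∈ mIdeal 𝒜, f ≠ 0 → 0 ≤ v.1 f) ∧
    sInf {x : EReal | ∃ f ∈ mIdeal 𝒜, f ≠ 0 ∧ x = v.1 f} = 0}

/-- `T(v;ξ) = sup { v(f)/⟨ξ,α⟩ : α ∈ Λ∖{0}, f ∈ R_α ∖ {0} }`. -/
def Tfun (v : R → EReal) (ξ : Fin r → ℝ) : EReal :=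
  sSup {x : EReal | ∃ (α : Fin r → ℤ) (f : R), α ≠ 0 ∧ f ∈ 𝒜 α ∧ f ≠ 0 ∧
    x = (((pairing ξ α)⁻¹ : ℝ) : EReal) * v f}

end

/-!
Fix an exhaustion of `X^an ∖ {o}` by compact sets `Z n` (semivaluations that are `≥ -n` on
generators of `R` and `≤ n` on some generator of `𝔪`; compactness comes from Tychonoff in
`[-∞, +∞]^R`) and approximate `φ` on `Z m` by Fubini–Study functions
`ψ_m = max_j (log|f_j| + λ_j)/⟨ξ, α_j⟩`. Replacing `ξ` by `ξ_i` in the denominators multiplies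
the `j`-th term by `⟨ξ, α_j⟩/⟨ξ_i, α_j⟩ → 1`, so the max moves by at most `t_i |ψ_m|` with
`t_i → 0`: the `ξ_i`-versions of `ψ_m` converge to `ψ_m` locally uniformly, and a diagonal
choice `m = μ i` gives the sequence.
-/

section UniformConvergence

variable {X β : Type*} [PseudoMetricSpace β]

theorem tendstoUniformlyOn_of_abs_sub_le_mul [TopologicalSpace X] {F : ℕ → X → ℝ} {f : X → ℝ}
    {K : Set X} (hK : IsCompact K) (hf : ContinuousOn f K) {t : ℕ → ℝ} (ht : Tendsto t atTop (𝓝 0))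
    (hFf : ∀ i, ∀ x ∈ K, |F i x - f x| ≤ t i * |f x|) :
    TendstoUniformlyOn F f atTop K := by
  obtain ⟨C, hC⟩ := hK.exists_bound_of_continuousOn hf
  rw [Metric.tendstoUniformlyOn_iff]
  intro ε hε
  have hsmall : ∀ᶠ i in atTop, |t i| * C < ε := by
    simpa using (ht.abs.mul_const C).eventually_lt_const (by simpa using hε)
  filter_upwards [hsmall] with i hi x hx
  calc dist (f x) (F i x) = |F i x - f x| := by rw [Real.dist_eq, abs_sub_comm]
    _ ≤ t i * |f x| := hFf i x hx
    _ ≤ |t i| * C := mul_le_mul (le_abs_self _) (hC x hx) (abs_nonneg _) (abs_nonneg _)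
    _ < ε := hi

theorem ContinuousMap.exists_seq_tendstoUniformlyOn_of_mem_closure [TopologicalSpace X]
    {S : Set C(X, β)} {φ : C(X, β)} (hφ : φ ∈ closure S) {Z : ℕ → Set X}
    (hZc : ∀ n, IsCompact (Z n)) (hZ : Monotone Z) :
    ∃ ψ : ℕ → C(X, β), (∀ m, ψ m ∈ S) ∧
      ∀ n, TendstoUniformlyOn (fun m => ψ m) φ atTop (Z n) := by
  have hb := nhds_basis_uniformity' (hasBasis_compactConvergenceUniformity (α := X) (β := β))
    (x := φ)
  rw [mem_closure_iff_nhds_basis hb] at hφ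
  have happrox : ∀ m : ℕ, ∃ ψ ∈ S, ∀ x ∈ Z m, dist (φ x) (ψ x) < 1 / ((m : ℝ) + 1) :=
    fun m => hφ (Z m, {p | dist p.1 p.2 < 1 / ((m : ℝ) + 1)})
      ⟨hZc m, Metric.dist_mem_uniformity (by positivity)⟩
  choose ψ hψS hψ using happrox
  refine ⟨ψ, hψS, fun n => Metric.tendstoUniformlyOn_iff.mpr fun ε hε => ?_⟩
  filter_upwards [eventually_ge_atTop n,
    tendsto_one_div_add_atTop_nhds_zero_nat.eventually_lt_const hε] with m hnm hm x hx
  exact (hψ m x (hZ hnm hx)).trans hm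

theorem exists_tendstoUniformlyOn_diagonal {Z : ℕ → Set X} (hZ : Monotone Z)
    {F : ℕ → ℕ → X → β} {ψ : ℕ → X → β} {φ : X → β}
    (hF : ∀ m, TendstoUniformlyOn (F m) (ψ m) atTop (Z m))
    (hψ : ∀ n, TendstoUniformlyOn ψ φ atTop (Z n)) :
    ∃ μ : ℕ → ℕ, ∀ n, TendstoUniformlyOn (fun i => F (μ i) i) φ atTop (Z n) := by
  have hI : ∀ m, ∃ I, ∀ i ≥ I, ∀ x ∈ Z m, dist (ψ m x) (F m i x) < 1 / ((m : ℝ) + 1) :=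
    fun m => eventually_atTop.mp (Metric.tendstoUniformlyOn_iff.mp (hF m) _ (by positivity))
  choose I hI using hI
  -- `μ i` is the largest `m ≤ i` such that `F m' i` is already `1/(m'+1)`-close to `ψ m'`
  -- on `Z m'` for every `m' ≤ m`
  set μ : ℕ → ℕ := fun i => Nat.findGreatest (fun m => ∀ m' ≤ m, I m' ≤ i) i
  have hμ_spec : ∀ i ≥ I 0, I (μ i) ≤ i := fun i hi =>
    Nat.findGreatest_spec (P := fun m => ∀ m' ≤ m, I m' ≤ i) (Nat.zero_le i)
      (fun m' hm' => by rwa [Nat.le_zero.mp hm']) (μ i) le_rfl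
  have hμ : Tendsto μ atTop atTop := by
    refine tendsto_atTop_atTop.mpr fun n => ⟨n + ∑ m ∈ Finset.range (n + 1), I m, fun i hi => ?_⟩
    refine Nat.le_findGreatest (by omega) fun m' hm' => ?_
    have := Finset.single_le_sum (fun m _ => Nat.zero_le (I m))
      (Finset.mem_range.mpr (by omega : m' < n + 1))
    omega
  refine ⟨μ, fun n => Metric.tendstoUniformlyOn_iff.mpr fun ε hε => ?_⟩
  have hψμ := hμ.eventually (Metric.tendstoUniformlyOn_iff.mp (hψ n) (ε / 2) (half_pos hε))
  filter_upwards [hψμ, hμ.eventually_ge_atTop n, eventually_ge_atTop (I 0),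
    hμ.eventually (tendsto_one_div_add_atTop_nhds_zero_nat.eventually_lt_const (half_pos hε))]
    with i hψi hni hi hsmall x hx
  calc dist (φ x) (F (μ i) i x) ≤ dist (φ x) (ψ (μ i) x) + dist (ψ (μ i) x) (F (μ i) i x) :=
        dist_triangle _ _ _
    _ < ε / 2 + ε / 2 := add_lt_add (hψi x hx)
        ((hI _ i (hμ_spec i hi) x (hZ hni hx)).trans hsmall)
    _ = ε := add_halves ε

end UniformConvergence

theorem EReal.exists_iSup_coe_mul_eq_coe_abs_sub_le {ι : Type*} [Finite ι] {u : ι → EReal}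
    {x : ℝ} (hu : ⨆ i, u i = x) {ρ : ι → ℝ} (hρ : ∀ i, 0 < ρ i) {t : ℝ}
    (ht : ∀ i, |ρ i - 1| ≤ t) :
    ∃ y : ℝ, ⨆ i, (ρ i : EReal) * u i = y ∧ |y - x| ≤ t * |x| := by
  have hρx : ∀ i, |ρ i * x - x| ≤ t * |x| := fun i => by
    rw [← sub_one_mul, _root_.abs_mul]
    exact mul_le_mul_of_nonneg_right (ht i) (abs_nonneg x)
  have hupper : ⨆ i, (ρ i : EReal) * u i ≤ ((x + t * |x| : ℝ) : EReal) := by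
    refine iSup_le fun i => ?_
    calc (ρ i : EReal) * u i ≤ (ρ i : EReal) * x :=
          mul_le_mul_of_nonneg_left (hu ▸ le_iSup u i) (EReal.coe_nonneg.mpr (hρ i).le)
      _ ≤ ((x + t * |x| : ℝ) : EReal) := by
          rw [← EReal.coe_mul, EReal.coe_le_coe_iff]
          linarith [(abs_le.mp (hρx i)).2]
  have : Nonempty ι := by
    by_contra! hempty
    simp at hu
  obtain ⟨i₀, hi₀⟩ := exists_eq_ciSup_of_finite (f := u)
  have hlower : ((x - t * |x| : ℝ) : EReal) ≤ ⨆ i, (ρ i : EReal) * u i := by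
    refine le_trans ?_ (le_iSup _ i₀)
    rw [hi₀, hu, ← EReal.coe_mul, EReal.coe_le_coe_iff]
    linarith [(abs_le.mp (hρx i₀)).1]
  lift ⨆ i, (ρ i : EReal) * u i to ℝ using
    ⟨(hupper.trans_lt (EReal.coe_lt_top _)).ne, ((EReal.bot_lt_coe _).trans_le hlower).ne'⟩
    with y hy
  refine ⟨y, rfl, abs_sub_le_iff.mpr ⟨?_, ?_⟩⟩
  · linarith [EReal.coe_le_coe_iff.mp hupper]
  · linarith [EReal.coe_le_coe_iff.mp hlower]

theorem EReal.isClosed_setOf_eq_add {X : Type*} [TopologicalSpace X] {u w z : X → EReal}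
    (hu : Continuous u) (hw : Continuous w) (hz : Continuous z) (a b : ℝ) :
    IsClosed {x | (a : EReal) ≤ u x ∧ (b : EReal) ≤ w x ∧ z x = u x + w x} := by
  have hs : IsClosed {x | (a : EReal) ≤ u x ∧ (b : EReal) ≤ w x} :=
    (isClosed_le continuous_const hu).inter (isClosed_le continuous_const hw)
  have hcont : ContinuousOn (fun x => (z x, u x + w x))
      {x | (a : EReal) ≤ u x ∧ (b : EReal) ≤ w x} := by
    refine hz.continuousOn.prodMk fun x hx => ContinuousAt.continuousWithinAt ?_
    exact (EReal.continuousAt_add (Or.inr ((EReal.bot_lt_coe b).trans_le hx.2).ne')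
      (Or.inl ((EReal.bot_lt_coe a).trans_le hx.1).ne')).comp (hu.prodMk hw).continuousAt
  convert hcont.preimage_isClosed_of_isClosed hs isClosed_diagonal using 1
  ext x
  simp [and_assoc]

section Semivaluation

variable {k R : Type*} [Field k] [CommRing R] [Algebra k R]

namespace IsSemival

variable {v : R → EReal}

theorem map_neg (hv : IsSemival k v) (f : R) : v (-f) = v f := by
  rw [neg_eq_neg_one_mul, ← map_one (algebraMap k R), ← _root_.map_neg, hv.2.1,
    hv.2.2.2.2 _ (by norm_num), zero_add]

theorem map_add_eq_of_lt (hv : IsSemival k v) {f g : R} (hfg : v f < v g) :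
    v (f + g) = v f := by
  refine le_antisymm ?_ (min_eq_left hfg.le ▸ hv.2.2.1 f g)
  have h := hv.2.2.1 (f + g) (-g)
  rw [add_neg_cancel_right, hv.map_neg] at h
  by_contra! hlt
  exact (min_le_iff.mp h).elim (fun h' => hlt.not_ge h') fun h' => hfg.not_ge h'

theorem eq_top_of_mem_span (hv : IsSemival k v) {H : Set R} (hH : ∀ h ∈ H, v h = ⊤) {f : R}
    (hf : f ∈ Ideal.span H) : v f = ⊤ := by
  induction hf using Submodule.span_induction with
  | mem x hx => exact hH x hx
  | zero => exact hv.2.2.2.1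
  | add x y _ _ hx hy => exact top_le_iff.mp (by simpa [hx, hy] using hv.2.2.1 x y)
  | smul a x _ hx => rw [smul_eq_mul, hv.2.1, hx, EReal.add_top_of_ne_bot (hv.1 a)]

theorem exists_le_of_adjoin_eq_top {G : Set R} (hG : Algebra.adjoin k G = ⊤) (b : ℝ) (f : R) :
    ∃ m : ℝ, ∀ v : R → EReal, IsSemival k v → (∀ g ∈ G, (b : EReal) ≤ v g) →
      (m : EReal) ≤ v f := by
  induction (hG ▸ Algebra.mem_top : f ∈ Algebra.adjoin k G) using Algebra.adjoin_induction with
  | mem x hx => exact ⟨b, fun v _ hb => hb x hx⟩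
  | algebraMap c =>
    refine ⟨0, fun v hv _ => ?_⟩
    rcases eq_or_ne c 0 with rfl | hc
    · simp [hv.2.2.2.1]
    · rw [hv.2.2.2.2 c hc]; rfl
  | add x y _ _ hx hy =>
    obtain ⟨⟨m₁, h₁⟩, ⟨m₂, h₂⟩⟩ := And.intro hx hy
    refine ⟨min m₁ m₂, fun v hv hb => le_trans ?_ (hv.2.2.1 x y)⟩
    exact le_min ((EReal.coe_le_coe_iff.mpr (min_le_left _ _)).trans (h₁ v hv hb))
      ((EReal.coe_le_coe_iff.mpr (min_le_right _ _)).trans (h₂ v hv hb))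
  | mul x y _ _ hx hy =>
    obtain ⟨⟨m₁, h₁⟩, ⟨m₂, h₂⟩⟩ := And.intro hx hy
    refine ⟨m₁ + m₂, fun v hv hb => ?_⟩
    rw [hv.2.1, EReal.coe_add]
    exact add_le_add (h₁ v hv hb) (h₂ v hv hb)

end IsSemival

theorem isClosed_setOf_isSemival_and_le (B : R → ℝ) :
    IsClosed {v : R → EReal | IsSemival k v ∧ ∀ f, (B f : EReal) ≤ v f} := by
  have heq : {v : R → EReal | IsSemival k v ∧ ∀ f, (B f : EReal) ≤ v f} =
      {v | ∀ f g, ((B f : EReal) ≤ v f ∧ (B g : EReal) ≤ v g ∧ v (f * g) = v f + v g) ∧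
        min (v f) (v g) ≤ v (f + g)} ∩ {v | v 0 = ⊤} ∩
        {v | ∀ c : k, c ≠ 0 → v (algebraMap k R c) = 0} := by
    ext v
    simp only [IsSemival, Set.mem_ofPred_eq, Set.mem_inter_iff]
    constructor
    · rintro ⟨⟨-, hmul, hadd, h0, halg⟩, hB⟩
      exact ⟨⟨fun f g => ⟨⟨hB f, hB g, hmul f g⟩, hadd f g⟩, h0⟩, halg⟩
    · rintro ⟨⟨h, h0⟩, halg⟩
      have hB : ∀ f, (B f : EReal) ≤ v f := fun f => (h f f).1.1
      exact ⟨⟨fun f => ((EReal.bot_lt_coe _).trans_le (hB f)).ne', fun f g => (h f g).1.2.2,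
        fun f g => (h f g).2, h0, halg⟩, hB⟩
  rw [heq]
  simp only [Set.ofPred_forall]
  refine (isClosed_iInter fun f => isClosed_iInter fun g => ?_).inter
    (isClosed_eq (continuous_apply 0) continuous_const) |>.inter
    (isClosed_iInter fun c => isClosed_iInter fun _ =>
      isClosed_eq (continuous_apply _) continuous_const)
  exact (EReal.isClosed_setOf_eq_add (continuous_apply f) (continuous_apply g)
    (continuous_apply (f * g)) (B f) (B g)).inter
    (isClosed_le ((continuous_apply f).min (continuous_apply g)) (continuous_apply (f + g)))

theorem isCompact_setOf_isSemival_and_le_of_adjoin_eq_top {G : Set R}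
    (hG : Algebra.adjoin k G = ⊤) (b : ℝ) :
    IsCompact {v : R → EReal | IsSemival k v ∧ ∀ g ∈ G, (b : EReal) ≤ v g} := by
  choose B hB using IsSemival.exists_le_of_adjoin_eq_top hG b
  have heq : {v : R → EReal | IsSemival k v ∧ ∀ g ∈ G, (b : EReal) ≤ v g} =
      {v | IsSemival k v ∧ ∀ f, (B f : EReal) ≤ v f} ∩ {v | ∀ g ∈ G, (b : EReal) ≤ v g} := by
    ext v
    exact ⟨fun ⟨hv, hb⟩ => ⟨⟨hv, fun f => hB f v hv hb⟩, hb⟩, fun ⟨⟨hv, _⟩, hb⟩ => ⟨hv, hb⟩⟩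
  rw [heq]
  refine ((isClosed_setOf_isSemival_and_le B).inter ?_).isCompact
  simp only [Set.ofPred_forall]
  exact isClosed_iInter fun g => isClosed_iInter fun _ => isClosed_le continuous_const
    (continuous_apply g)

end Semivaluation

theorem continuous_pairing_left {r : ℕ} (α : Fin r → ℤ) :
    Continuous fun ξ : Fin r → ℝ => pairing ξ α := by
  unfold pairing
  fun_prop

theorem fsTerm_eq_coe_mul {R : Type*} {r : ℕ} {ξ ξ' : Fin r → ℝ} {α : Fin r → ℤ}
    (hξ : pairing ξ α ≠ 0) (f : R) (lam : ℝ) (v : R → EReal) :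
    fsTerm ξ' α f lam v = ((pairing ξ α / pairing ξ' α : ℝ) : EReal) * fsTerm ξ α f lam v := by
  rw [fsTerm, fsTerm, ← mul_assoc, ← EReal.coe_mul, div_mul_eq_mul_div, mul_inv_cancel₀ hξ,
    one_div]

section Cone

variable {k R : Type*} [Field k] [CommRing R] [Algebra k R] {r : ℕ}
  (𝒜 : (Fin r → ℤ) → Submodule k R)

theorem exists_sub_algebraMap_mem_mIdeal [GradedAlgebra 𝒜]
    (h0 : 𝒜 0 = Submodule.span k {(1 : R)}) (f : R) :
    ∃ c : k, f - algebraMap k R c ∈ mIdeal 𝒜 := by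
  induction f using DirectSum.Decomposition.inductionOn 𝒜 with
  | zero => exact ⟨0, by simp⟩
  | @homogeneous α f =>
    by_cases hα : α = 0
    · subst hα
      have hf : (f : R) ∈ Submodule.span k {(1 : R)} := h0 ▸ f.2
      obtain ⟨c, hc⟩ := Submodule.mem_span_singleton.mp hf
      exact ⟨c, by simp [← hc, Algebra.algebraMap_eq_smul_one]⟩
    · have hf : (f : R) ∈ mIdeal 𝒜 := Ideal.subset_span ⟨α, hα, f.2⟩
      exact ⟨0, by simpa using hf⟩
  | add f g hf hg =>
    obtain ⟨⟨c, hc⟩, ⟨d, hd⟩⟩ := And.intro hf hg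
    exact ⟨c + d, by simpa [add_sub_add_comm] using add_mem hc hd⟩

theorem IsSemival.eq_oFun_of_eq_top [GradedAlgebra 𝒜] (h0 : 𝒜 0 = Submodule.span k {(1 : R)})
    {v : R → EReal} (hv : IsSemival k v) {H : Set R} (hH : Ideal.span H = mIdeal 𝒜)
    (hvH : ∀ h ∈ H, v h = ⊤) : v = oFun 𝒜 := by
  have hm : ∀ f ∈ mIdeal 𝒜, v f = ⊤ := fun f hf => hv.eq_top_of_mem_span hvH (hH ▸ hf)
  funext f
  by_cases hf : f ∈ mIdeal 𝒜
  · rw [oFun, if_pos hf, hm f hf]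
  · obtain ⟨c, hc⟩ := exists_sub_algebraMap_mem_mIdeal 𝒜 h0 f
    have hc0 : c ≠ 0 := by
      rintro rfl
      exact hf (by simpa using hc)
    have hvc : v (algebraMap k R c) = 0 := hv.2.2.2.2 c hc0
    rw [oFun, if_neg hf, ← add_sub_cancel (algebraMap k R c) f,
      hv.map_add_eq_of_lt (by rw [hvc, hm _ hc]; exact EReal.zero_lt_top), hvc]

theorem exists_neg_lt_and_exists_lt_of_mem_XanP [GradedAlgebra 𝒜]
    (h0 : 𝒜 0 = Submodule.span k {(1 : R)}) (G : Finset R) {H : Finset R}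
    (hH : Ideal.span (H : Set R) = mIdeal 𝒜) {v : R → EReal} (hv : v ∈ XanP 𝒜) :
    ∃ n : ℕ, (∀ g ∈ G, ((-n : ℝ) : EReal) < v g) ∧ ∃ h ∈ H, v h < ((n : ℝ) : EReal) := by
  obtain ⟨h, hh, hvh⟩ : ∃ h ∈ H, v h ≠ ⊤ := by
    by_contra! htop
    exact hv.2 (hv.1.eq_oFun_of_eq_top 𝒜 h0 hH htop)
  have hbelow : ∀ᶠ n : ℕ in atTop, ∀ g ∈ G, ((-n : ℝ) : EReal) < v g :=
    (eventually_all_finset G).mpr fun g _ =>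
      (EReal.tendsto_coe_nhds_bot_iff.mpr (tendsto_neg_atTop_atBot.comp
        tendsto_natCast_atTop_atTop)).eventually_lt_const (bot_lt_iff_ne_bot.mpr (hv.1.1 g))
  have habove : ∀ᶠ n : ℕ in atTop, v h < ((n : ℝ) : EReal) :=
    (EReal.tendsto_coe_nhds_top_iff.mpr tendsto_natCast_atTop_atTop).eventually_const_lt
      (lt_top_iff_ne_top.mpr hvh)
  obtain ⟨n, hn_below, hn_above⟩ := (hbelow.and habove).exists
  exact ⟨n, hn_below, h, hh, hn_above⟩

theorem exists_compact_exhaustion [GradedAlgebra 𝒜] [Algebra.FiniteType k R]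
    (h0 : 𝒜 0 = Submodule.span k {(1 : R)}) :
    ∃ Z : ℕ → Set (XanP 𝒜), (∀ n, IsCompact (Z n)) ∧ Monotone Z ∧
      ∀ K : Set (XanP 𝒜), IsCompact K → ∃ n, K ⊆ Z n := by
  obtain ⟨G, hG⟩ := Algebra.FiniteType.out (R := k) (A := R)
  have : IsNoetherianRing R := Algebra.FiniteType.isNoetherianRing k R
  obtain ⟨H, hH⟩ := isNoetherian_def.mp this (mIdeal 𝒜)
  set W : ℕ → Set (R → EReal) := fun n =>
    {v | IsSemival k v ∧ ∀ g ∈ (G : Set R), ((-n : ℝ) : EReal) ≤ v g} ∩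
      {v | ∃ h ∈ H, v h ≤ ((n : ℝ) : EReal)}
  have hWX : ∀ n, W n ⊆ XanP 𝒜 := by
    rintro n v ⟨⟨hv, -⟩, h, hh, hvh⟩
    refine ⟨hv, fun hvo => ?_⟩
    rw [hvo, oFun, if_pos (hH ▸ Ideal.subset_span hh)] at hvh
    exact (EReal.coe_lt_top _).not_ge hvh
  have hWc : ∀ n, IsCompact (W n) := fun n => by
    refine (isCompact_setOf_isSemival_and_le_of_adjoin_eq_top hG _).inter_right ?_
    convert isClosed_biUnion_finset (s := H) fun h _ =>
      isClosed_le (continuous_apply h) (continuous_const (y := ((n : ℝ) : EReal))) using 1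
    ext v
    simp
  -- open shrinkings of the `Z n`, so that a compact set lies in one of them
  set U : ℕ → Set (XanP 𝒜) := fun n =>
    {v | ∀ g ∈ G, ((-n : ℝ) : EReal) < v.1 g} ∩ {v | ∃ h ∈ H, v.1 h < ((n : ℝ) : EReal)}
  have hUo : ∀ n, IsOpen (U n) := fun n => by
    have hc : ∀ f : R, Continuous fun v : XanP 𝒜 => v.1 f :=
      fun f => (continuous_apply f).comp continuous_subtype_val
    refine IsOpen.inter ?_ ?_
    · simp only [Set.ofPred_forall]
      exact isOpen_biInter_finset fun g _ => isOpen_lt continuous_const (hc g)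
    · convert isOpen_biUnion (s := (H : Set R)) fun h _ =>
        isOpen_lt (hc h) (continuous_const (y := ((n : ℝ) : EReal))) using 1
      ext v
      simp
  have hUmono : Monotone U := by
    refine fun a b hab v ⟨hg, h, hh, hvh⟩ => ⟨fun g hgG => lt_of_le_of_lt ?_ (hg g hgG),
      h, hh, hvh.trans_le ?_⟩ <;> exact EReal.coe_le_coe_iff.mpr (by simpa using hab)
  refine ⟨fun n => Subtype.val ⁻¹' W n, fun n => ?_, fun a b hab v hv => ?_, fun K hK => ?_⟩
  · rw [Subtype.isCompact_iff, Subtype.image_preimage_coe, Set.inter_eq_right.mpr (hWX n)]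
    exact hWc n
  · obtain ⟨⟨hsv, hg⟩, h, hh, hvh⟩ := hv
    refine ⟨⟨hsv, fun g hgG => le_trans ?_ (hg g hgG)⟩, h, hh, hvh.trans ?_⟩ <;>
      exact EReal.coe_le_coe_iff.mpr (by simpa using hab)
  · obtain ⟨n, hn⟩ := hK.elim_directed_cover U hUo (fun v _ => Set.mem_iUnion.mpr
      (exists_neg_lt_and_exists_lt_of_mem_XanP 𝒜 h0 G hH v.2)) hUmono.directed_le
    refine ⟨n, fun v hv => ?_⟩
    obtain ⟨hg, h, hh, hvh⟩ := hn hv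
    exact ⟨⟨v.2.1, fun g hgG => (hg g hgG).le⟩, h, hh, hvh.le⟩

theorem IsReeb.pairing_pos {ξ : Fin r → ℝ} (hξ : IsReeb 𝒜 ξ) {α : Fin r → ℤ} {f : R}
    (hα : α ≠ 0) (hf : f ∈ 𝒜 α) (hf0 : f ≠ 0) : 0 < pairing ξ α :=
  hξ α hα fun hbot => hf0 (by rwa [hbot, Submodule.mem_bot] at hf)

theorem IsFS.exists_tendstoUniformlyOn {ξ : Fin r → ℝ} (hξ : IsReeb 𝒜 ξ) {ψ : C(XanP 𝒜, ℝ)}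
    (hψ : IsFS 𝒜 ξ ψ) {ξi : ℕ → Fin r → ℝ} (hξi : ∀ i, IsReeb 𝒜 (ξi i))
    (hconv : Tendsto ξi atTop (𝓝 ξ)) :
    ∃ ψi : ℕ → XanP 𝒜 → ℝ, (∀ i, IsFS 𝒜 (ξi i) (ψi i)) ∧
      ∀ K, IsCompact K → TendstoUniformlyOn ψi ψ atTop K := by
  obtain ⟨N, f, α, lam, hdata, hrad, hψv⟩ := hψ
  have hpos : ∀ {ζ}, IsReeb 𝒜 ζ → ∀ j, 0 < pairing ζ (α j) := fun hζ j =>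
    hζ.pairing_pos 𝒜 (hdata j).1 (hdata j).2.1 (hdata j).2.2
  set ρ : ℕ → Fin N → ℝ := fun i j => pairing ξ (α j) / pairing (ξi i) (α j)
  set t : ℕ → ℝ := fun i => ∑ j, |ρ i j - 1|
  have ht : Tendsto t atTop (𝓝 0) := by
    have hρ : ∀ j, Tendsto (fun i => ρ i j) atTop (𝓝 1) := fun j => by
      have := (tendsto_const_nhds (x := pairing ξ (α j))).div
        (((continuous_pairing_left (α j)).tendsto ξ).comp hconv) (hpos hξ j).ne'
      rwa [div_self (hpos hξ j).ne'] at this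
    simpa using tendsto_finsetSum Finset.univ fun j _ => ((hρ j).sub_const 1).abs
  have hrescale : ∀ i v, ∃ y : ℝ, ⨆ j, fsTerm (ξi i) (α j) (f j) (lam j) v.1 = y ∧
      |y - ψ v| ≤ t i * |ψ v| := fun i v => by
    rw [iSup_congr fun j => fsTerm_eq_coe_mul (ξ' := ξi i) (hpos hξ j).ne' _ _ _]
    exact EReal.exists_iSup_coe_mul_eq_coe_abs_sub_le (hψv v).symm
      (fun j => div_pos (hpos hξ j) (hpos (hξi i) j))
      (fun j => Finset.single_le_sum (f := fun j => |ρ i j - 1|) (fun _ _ => abs_nonneg _)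
        (Finset.mem_univ j))
  choose y hy hyψ using hrescale
  exact ⟨y, fun i => ⟨N, f, α, lam, hdata, hrad, fun v => (hy i v).symm⟩, fun K hK =>
    tendstoUniformlyOn_of_abs_sub_le_mul hK ψ.continuous.continuousOn ht fun i v _ => hyψ i v⟩

end Cone

section Statements

variable {k : Type*} [Field k] [IsAlgClosed k] [CharZero k]
variable {R : Type*} [CommRing R] [IsDomain R] [IsIntegrallyClosed R] [Algebra k R]
  [Algebra.FiniteType k R]
variable {r : ℕ} (𝒜 : (Fin r → ℤ) → Submodule k R) [GradedAlgebra 𝒜]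

theorem statement2 (h0 : 𝒜 0 = Submodule.span k {(1 : R)}) (ξ : Fin r → ℝ)
    (hξ : IsReeb 𝒜 ξ) (φ : C(↥(XanP 𝒜), ℝ)) (hφ : φ ∈ cpsh 𝒜 ξ)
    (ξi : ℕ → Fin r → ℝ) (hξi : ∀ i, IsReeb 𝒜 (ξi i))
    (hconv : Filter.Tendsto ξi Filter.atTop (nhds ξ)) :
    ∃ φi : ℕ → ↥(XanP 𝒜) → ℝ, (∀ i, IsFS 𝒜 (ξi i) (φi i)) ∧
      ∀ K : Set (↥(XanP 𝒜)), IsCompact K →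
        TendstoUniformlyOn (fun i => φi i) ⇑φ Filter.atTop K := by
  obtain ⟨Z, hZc, hZmono, hZK⟩ := exists_compact_exhaustion 𝒜 h0
  obtain ⟨ψ, hψFS, hψφ⟩ :=
    ContinuousMap.exists_seq_tendstoUniformlyOn_of_mem_closure hφ hZc hZmono
  choose F hFFS hFψ using fun m => IsFS.exists_tendstoUniformlyOn 𝒜 hξ (hψFS m) hξi hconv
  obtain ⟨μ, hμ⟩ := exists_tendstoUniformlyOn_diagonal hZmono (fun m => hFψ m (Z m) (hZc m)) hψφ
  refine ⟨fun i => F (μ i) i, fun i => hFFS (μ i) i, fun K hK => ?_⟩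
  obtain ⟨n, hn⟩ := hZK K hK
  exact (hμ n).mono hn

end Statements
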